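/- arXiv:1403.6883 — 2 statements merged into one kernel-verified Lean document; each statement's English description precedes it below -/
import Mathlib

section
/- Let f be a supercell trigonometric polynomial that is real-valued (f(x) ∈ ℝ for all x ∈ ℝ) and satisfies M_r := Σ_{j ∈ ℤ} |c_{r+Nj}(f)|² > 0 for every residue r ∈ {0, 1, …, N−1}. Then the shift-orthogonal projection ψ of f, defined by the Fourier coefficients c_n(ψ) = c_n(f) / (N · √(M_{n mod N})), is also real-valued. (This is the paper's claim that, for a real-valued input function f, the projection algorithm outputs a real-valued projection Π̂f.) -/
open MeasureTheory Complex
open scoped BigOperators Real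

/-- A supercell trigonometric polynomial with finitely supported Fourier
coefficients `c : ℤ →₀ ℂ`: `ψ(x) = ∑ₙ cₙ e^{2πi n x / N}`. -/
noncomputable def scFun (N : ℕ) (c : ℤ →₀ ℂ) : ℝ → ℂ :=
  fun x => ∑ n ∈ c.support, c n * Complex.exp (2 * Real.pi * Complex.I * (n : ℂ) * (x : ℂ) / (N : ℂ))

/-- `ψ` is shift-orthogonal: for every integer `m`,
`∫₀ᴺ conj(ψ(x − m)) ψ(x) dx = 1` if `N ∣ m` and `0` otherwise. -/
def ShiftOrthoFun (N : ℕ) (ψ : ℝ → ℂ) : Prop :=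
  ∀ m : ℤ, (∫ x in (0:ℝ)..(N:ℝ), (starRingEnd ℂ) (ψ (x - (m : ℝ))) * ψ x)
    = if (N : ℤ) ∣ m then 1 else 0

lemma int_exp (N : ℕ) (hN : 0 < N) (k : ℤ) :
    (∫ x in (0:ℝ)..(N:ℝ), Complex.exp (2 * Real.pi * Complex.I * (k : ℂ) * (x : ℂ) / (N : ℂ)))
      = if k = 0 then (N : ℂ) else 0 := by
  have hNc : (N : ℂ) ≠ 0 := Nat.cast_ne_zero.mpr hN.ne'
  by_cases hk : k = 0
  · simp [hk, Complex.ofReal_natCast]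
  · have hc : (2 * Real.pi * Complex.I * (k : ℂ) / (N : ℂ)) ≠ 0 := by
      apply div_ne_zero _ hNc
      have : (Real.pi : ℂ) ≠ 0 := Complex.ofReal_ne_zero.mpr Real.pi_ne_zero
      simp [Complex.I_ne_zero, this, hk]
    have h1 : ∀ x : ℝ, 2 * Real.pi * Complex.I * (k : ℂ) * (x : ℂ) / (N : ℂ)
        = (2 * Real.pi * Complex.I * (k : ℂ) / (N : ℂ)) * (x : ℂ) := by
      intro x; ring
    simp only [h1]
    rw [integral_exp_mul_complex hc]
    have h2 : (2 * Real.pi * Complex.I * (k : ℂ) / (N : ℂ)) * ((N : ℝ) : ℂ)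
        = (k : ℂ) * (2 * Real.pi * Complex.I) := by
      rw [Complex.ofReal_natCast]
      field_simp
    rw [h2, Complex.exp_int_mul_two_pi_mul_I]
    simp [hk]

lemma term_integrable (N : ℕ) (a : ℂ) (n : ℤ) :
    IntervalIntegrable
      (fun x : ℝ => a * Complex.exp (2 * Real.pi * Complex.I * (n : ℂ) * (x : ℂ) / (N : ℂ)))
      MeasureTheory.volume (0:ℝ) (N:ℝ) := by
  apply Continuous.intervalIntegrable
  continuity

lemma coeff_eq (N : ℕ) (hN : 0 < N) (c : ℤ →₀ ℂ) (m : ℤ) :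
    (∫ x in (0:ℝ)..(N:ℝ),
        scFun N c x * Complex.exp (-(2 * Real.pi * Complex.I * (m : ℂ) * (x : ℂ) / (N : ℂ))))
      = (N : ℂ) * c m := by
  have key : ∀ x : ℝ,
      scFun N c x * Complex.exp (-(2 * Real.pi * Complex.I * (m : ℂ) * (x : ℂ) / (N : ℂ)))
      = ∑ n ∈ c.support,
          c n * Complex.exp (2 * Real.pi * Complex.I * ((n - m : ℤ) : ℂ) * (x : ℂ) / (N : ℂ)) := by
    intro x
    rw [scFun, Finset.sum_mul]
    apply Finset.sum_congr rfl
    intro n _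
    rw [mul_assoc, ← Complex.exp_add]
    congr 2
    push_cast
    ring
  simp only [key]
  rw [intervalIntegral.integral_finset_sum (fun n _ => term_integrable N (c n) (n - m))]
  have : ∀ n ∈ c.support,
      (∫ x in (0:ℝ)..(N:ℝ),
        c n * Complex.exp (2 * Real.pi * Complex.I * ((n - m : ℤ) : ℂ) * (x : ℂ) / (N : ℂ)))
      = if n = m then c n * N else 0 := by
    intro n _
    rw [intervalIntegral.integral_const_mul, int_exp N hN]
    by_cases h : n = m <;> simp [h, sub_eq_zero]
  rw [Finset.sum_congr rfl this, Finset.sum_ite_eq' c.support m (fun n => c n * N)]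
  by_cases hm : m ∈ c.support
  · simp [hm, mul_comm]
  · simp [hm, Finsupp.notMem_support_iff.mp hm]

lemma conj_coeff_eq (N : ℕ) (hN : 0 < N) (c : ℤ →₀ ℂ) (m : ℤ) :
    (∫ x in (0:ℝ)..(N:ℝ),
        (starRingEnd ℂ) (scFun N c x)
          * Complex.exp (-(2 * Real.pi * Complex.I * (m : ℂ) * (x : ℂ) / (N : ℂ))))
      = (N : ℂ) * (starRingEnd ℂ) (c (-m)) := by
  have key : ∀ x : ℝ,
      (starRingEnd ℂ) (scFun N c x)
        * Complex.exp (-(2 * Real.pi * Complex.I * (m : ℂ) * (x : ℂ) / (N : ℂ)))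
      = ∑ n ∈ c.support,
          (starRingEnd ℂ) (c n)
            * Complex.exp (2 * Real.pi * Complex.I * ((-n - m : ℤ) : ℂ) * (x : ℂ) / (N : ℂ)) := by
    intro x
    rw [scFun, map_sum, Finset.sum_mul]
    apply Finset.sum_congr rfl
    intro n _
    rw [map_mul, ← Complex.exp_conj, mul_assoc, ← Complex.exp_add]
    congr 2
    simp only [map_div₀, map_mul, Complex.conj_I, map_ofNat, Complex.conj_ofReal,
      map_intCast, map_natCast]
    push_cast
    ring
  simp only [key]
  rw [intervalIntegral.integral_finset_sum
    (fun n _ => term_integrable N ((starRingEnd ℂ) (c n)) (-n - m))]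
  have : ∀ n ∈ c.support,
      (∫ x in (0:ℝ)..(N:ℝ),
        (starRingEnd ℂ) (c n)
          * Complex.exp (2 * Real.pi * Complex.I * ((-n - m : ℤ) : ℂ) * (x : ℂ) / (N : ℂ)))
      = if n = -m then (starRingEnd ℂ) (c n) * N else 0 := by
    intro n _
    rw [intervalIntegral.integral_const_mul, int_exp N hN]
    by_cases h : n = -m
    · simp [h]
    · have : ¬ (-n - m = 0) := by omega
      simp [h, this]
  rw [Finset.sum_congr rfl this,
    Finset.sum_ite_eq' c.support (-m) (fun n => (starRingEnd ℂ) (c n) * N)]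
  by_cases hm : -m ∈ c.support
  · simp [hm, mul_comm]
  · simp [hm, Finsupp.notMem_support_iff.mp hm]

/-- **The projection algorithm maps real inputs to real outputs.** If `f` is a
real-valued supercell trigonometric polynomial with all fiber masses positive,
then its shift-orthogonal projection `ψ`, defined by
`cₙ(ψ) = cₙ(f) / (N √(M (n mod N)))`, is also real-valued. -/
theorem projection_real_of_real (N : ℕ) (hN : 0 < N) (cf : ℤ →₀ ℂ)
    (hreal : ∀ x : ℝ, (scFun N cf x).im = 0)
    (M : ℤ → ℝ) (hM : ∀ r : ℤ, M r = ∑' j : ℤ, ‖cf (r + (N : ℤ) * j)‖ ^ 2)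
    (hMpos : ∀ r ∈ Finset.range N, 0 < M (r : ℤ))
    (cψ : ℤ →₀ ℂ)
    (hcψ : ∀ n : ℤ, cψ n = cf n / ((N : ℂ) * (Real.sqrt (M (n % (N : ℤ))) : ℂ))) :
    ∀ x : ℝ, (scFun N cψ x).im = 0 := by
  have hNc : (N : ℂ) ≠ 0 := Nat.cast_ne_zero.mpr hN.ne'
  -- f real ⇒ cf m = conj (cf (-m))
  have hconj : ∀ m : ℤ, cf m = (starRingEnd ℂ) (cf (-m)) := by
    intro m
    have hfc : ∀ x : ℝ, scFun N cf x = (starRingEnd ℂ) (scFun N cf x) := by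
      intro x
      exact ((Complex.conj_eq_iff_im).mpr (hreal x)).symm
    have := coeff_eq N hN cf m
    have heq : (∫ x in (0:ℝ)..(N:ℝ),
        scFun N cf x * Complex.exp (-(2 * Real.pi * Complex.I * (m : ℂ) * (x : ℂ) / (N : ℂ))))
      = ∫ x in (0:ℝ)..(N:ℝ),
        (starRingEnd ℂ) (scFun N cf x)
          * Complex.exp (-(2 * Real.pi * Complex.I * (m : ℂ) * (x : ℂ) / (N : ℂ))) := by
      apply intervalIntegral.integral_congr
      intro x _
      dsimp only
      rw [← hfc x]
    rw [heq, conj_coeff_eq N hN cf m] at this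
    exact (mul_left_cancel₀ hNc this.symm)
  -- M is periodic mod N and even
  have hMshift : ∀ a t : ℤ, M (a + (N : ℤ) * t) = M a := by
    intro a t
    rw [hM, hM]
    have := (Equiv.addRight t).tsum_eq (fun j : ℤ => ‖cf (a + (N : ℤ) * j)‖ ^ 2)
    rw [← this]
    apply tsum_congr
    intro j
    simp only [Equiv.coe_addRight]
    congr 2
    ring
  have hMneg : ∀ a : ℤ, M (-a) = M a := by
    intro a
    rw [hM, hM]
    have := (Equiv.neg ℤ).tsum_eq (fun j : ℤ => ‖cf (-a + (N : ℤ) * j)‖ ^ 2)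
    rw [← this]
    apply tsum_congr
    intro j
    simp only [Equiv.neg_apply]
    have : cf (a + (N : ℤ) * j) = (starRingEnd ℂ) (cf (-a + (N : ℤ) * -j)) := by
      rw [hconj (a + (N : ℤ) * j)]
      congr 1
      ring
    rw [this]
    simp
  have hMmod : ∀ a : ℤ, M (a % (N : ℤ)) = M a := by
    intro a
    have : a % (N : ℤ) = a + (N : ℤ) * (-(a / (N : ℤ))) := by
      rw [Int.emod_def]; ring
    rw [this, hMshift]
  -- hence cψ m = conj (cψ (-m))
  have hψconj : ∀ m : ℤ, cψ m = (starRingEnd ℂ) (cψ (-m)) := by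
    intro m
    rw [hcψ, hcψ, map_div₀, map_mul, ← hconj m, Complex.conj_ofReal, map_natCast]
    have : M (-m % (N : ℤ)) = M (m % (N : ℤ)) := by
      rw [hMmod, hMmod, hMneg]
    rw [this]
  -- conclude
  intro x
  rw [← Complex.conj_eq_iff_im]
  classical
  set S : Finset ℤ := cψ.support ∪ cψ.support.image (fun n => -n) with hS
  have hsub : cψ.support ⊆ S := Finset.subset_union_left
  have hsum : scFun N cψ x = ∑ n ∈ S,
      cψ n * Complex.exp (2 * Real.pi * Complex.I * (n : ℂ) * (x : ℂ) / (N : ℂ)) := by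
    rw [scFun]
    apply Finset.sum_subset hsub
    intro n _ hn
    rw [Finsupp.notMem_support_iff.mp hn, zero_mul]
  have hSneg : ∀ n : ℤ, n ∈ S → -n ∈ S := by
    intro n hn
    rw [hS, Finset.mem_union] at hn ⊢
    rcases hn with h | h
    · right; exact Finset.mem_image.mpr ⟨n, h, rfl⟩
    · left; rcases Finset.mem_image.mp h with ⟨a, ha, rfl⟩; simpa using ha
  rw [hsum, map_sum]
  have congr1 : ∀ n ∈ S,
      (starRingEnd ℂ)
        (cψ n * Complex.exp (2 * Real.pi * Complex.I * (n : ℂ) * (x : ℂ) / (N : ℂ)))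
      = cψ (-n) * Complex.exp (2 * Real.pi * Complex.I * ((-n : ℤ) : ℂ) * (x : ℂ) / (N : ℂ)) := by
    intro n _
    rw [map_mul, ← Complex.exp_conj]
    have h1 : (starRingEnd ℂ) (cψ n) = cψ (-n) := by
      rw [hψconj n]; simp [Complex.conj_conj]
    rw [h1]
    congr 2
    simp only [map_div₀, map_mul, Complex.conj_I, map_ofNat, Complex.conj_ofReal,
      map_intCast, map_natCast]
    push_cast
    ring
  rw [Finset.sum_congr rfl congr1]
  apply Finset.sum_nbij' (fun n => -n) (fun n => -n)
  · intro n hn; exact hSneg n hn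
  · intro n hn; exact hSneg n hn
  · intro n _; ring
  · intro n _; ring
  · intro n _; simp
end

section
/- Let N ≥ 2 and let f be a supercell trigonometric polynomial such that M_r := Σ_{j ∈ ℤ} |c_{r+Nj}(f)|² = 0 for some residue r ∈ {0, 1, …, N−1}, while M_{r'} > 0 for every other residue r'. Then the shift-orthogonal projection problem argmin ‖f − ψ‖₂ over shift-orthogonal supercell trigonometric polynomials ψ does not have a unique solution: there exist two distinct shift-orthogonal supercell trigonometric polynomials ψ₁ ≠ ψ₂ with ∫_0^N |f − ψ₁|² dx = ∫_0^N |f − ψ₂|² dx ≤ ∫_0^N |f − φ|² dx for every shift-orthogonal supercell trigonometric polynomial φ. (This is the paper's claim that Π̂f is not necessarily unique, namely when Σ_G |f̃(k+G)|² = 0 for some k.) -/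
open MeasureTheory Complex
open scoped BigOperators Real

noncomputable def EE (N : ℕ) (n : ℤ) (x : ℝ) : ℂ :=
  Complex.exp (2 * Real.pi * Complex.I * (n : ℂ) * (x : ℂ) / (N : ℂ))

lemma EE_ne_zero (N : ℕ) (n : ℤ) (x : ℝ) : EE N n x ≠ 0 := Complex.exp_ne_zero _

lemma conj_EE (N : ℕ) (n : ℤ) (x : ℝ) : (starRingEnd ℂ) (EE N n x) = EE N (-n) x := by
  rw [EE, EE, ← Complex.exp_conj]
  congr 1
  simp [map_div₀, Complex.conj_I, Complex.conj_ofReal, map_ofNat]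

lemma EE_mul (N : ℕ) (n k : ℤ) (x : ℝ) : EE N n x * EE N k x = EE N (n + k) x := by
  rw [EE, EE, EE, ← Complex.exp_add]
  congr 1
  push_cast
  ring

lemma EE_shift (N : ℕ) (n m : ℤ) (x : ℝ) :
    EE N n (x - (m : ℝ)) = EE N n x * EE N (-(n * m)) 1 := by
  rw [EE, EE, EE, ← Complex.exp_add]
  congr 1
  push_cast
  ring

lemma EE_pow (N : ℕ) (k : ℤ) (s : ℕ) : EE N k 1 ^ s = EE N (k * s) 1 := by
  rw [EE, EE, ← Complex.exp_nat_mul]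
  congr 1
  push_cast
  ring

lemma EE_int_mul (N : ℕ) (hN : 0 < N) (j : ℤ) : EE N (N * j) 1 = 1 := by
  have hNC : (N : ℂ) ≠ 0 := Nat.cast_ne_zero.2 hN.ne'
  rw [EE]
  rw [show (2 * (Real.pi:ℂ) * Complex.I * ((N * j : ℤ) : ℂ) * ((1:ℝ):ℂ) / (N:ℂ))
      = (j : ℂ) * (2 * (Real.pi:ℂ) * Complex.I) by push_cast; field_simp]
  exact Complex.exp_int_mul_two_pi_mul_I j

lemma EE_one_eq_one_iff (N : ℕ) (hN : 0 < N) (k : ℤ) : EE N k 1 = 1 ↔ (N : ℤ) ∣ k := by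
  constructor
  · intro h
    rw [EE, Complex.exp_eq_one_iff] at h
    obtain ⟨n, hn⟩ := h
    have hNC : (N : ℂ) ≠ 0 := Nat.cast_ne_zero.2 hN.ne'
    have hpi : (2 * (Real.pi:ℂ) * Complex.I) ≠ 0 := by
      simp [Real.pi_ne_zero, Complex.I_ne_zero]
    have hkc : (k : ℂ) = (N : ℂ) * n := by
      field_simp at hn
      have := mul_left_cancel₀ hpi (show 2 * (Real.pi:ℂ) * Complex.I * (k:ℂ)
        = 2 * (Real.pi:ℂ) * Complex.I * ((N:ℂ) * n) by push_cast at hn; linear_combination (2 * (Real.pi:ℂ) * Complex.I) * hn)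
      exact this
    exact ⟨n, by exact_mod_cast hkc⟩
  · rintro ⟨j, rfl⟩
    exact EE_int_mul N hN j

lemma EE_integral (N : ℕ) (hN : 0 < N) (k : ℤ) :
    ∫ x in (0:ℝ)..(N:ℝ), EE N k x = if k = 0 then (N : ℂ) else 0 := by
  have hNC : (N : ℂ) ≠ 0 := Nat.cast_ne_zero.2 hN.ne'
  have hEE : ∀ x : ℝ, EE N k x = Complex.exp ((2 * (Real.pi:ℂ) * Complex.I * k / N) * x) := by
    intro x; rw [EE]; congr 1; ring
  by_cases hk : k = 0
  · subst hk
    simp only [hEE]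
    simp
  · have hc : (2 * (Real.pi:ℂ) * Complex.I * k / N) ≠ 0 := by
      apply div_ne_zero _ hNC
      simp [Real.pi_ne_zero, Complex.I_ne_zero, hk]
    rw [if_neg hk]
    simp only [hEE]
    rw [integral_exp_mul_complex hc]
    have h1 : Complex.exp ((2 * (Real.pi:ℂ) * Complex.I * k / N) * (N:ℝ)) = 1 := by
      rw [show ((2 * (Real.pi:ℂ) * Complex.I * k / N) * ((N:ℝ):ℂ)) = (k:ℂ) * (2 * Real.pi * Complex.I) by
        push_cast; field_simp]
      exact Complex.exp_int_mul_two_pi_mul_I k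
    rw [h1]
    simp

-- geometric sum
lemma EE_geom (N : ℕ) (hN : 0 < N) (k : ℤ) :
    ∑ s ∈ Finset.range N, EE N (k * s) 1 = if (N : ℤ) ∣ k then (N : ℂ) else 0 := by
  have h : ∀ s ∈ Finset.range N, EE N (k * s) 1 = EE N k 1 ^ s := fun s _ => (EE_pow N k s).symm
  rw [Finset.sum_congr rfl h]
  by_cases hd : (N : ℤ) ∣ k
  · rw [if_pos hd]
    have h1 : EE N k 1 = 1 := (EE_one_eq_one_iff N hN k).2 hd
    simp [h1]
  · rw [if_neg hd]
    have h1 : EE N k 1 ≠ 1 := fun h => hd ((EE_one_eq_one_iff N hN k).1 h)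
    rw [geom_sum_eq h1]
    rw [EE_pow, (EE_one_eq_one_iff N hN (k * N)).2 ⟨k, mul_comm k N⟩]
    simp

lemma scFun_eq (N : ℕ) (c : ℤ →₀ ℂ) (x : ℝ) :
    scFun N c x = ∑ n ∈ c.support, c n * EE N n x := rfl

lemma scFun_eq_superset (N : ℕ) (c : ℤ →₀ ℂ) {U : Finset ℤ} (hU : c.support ⊆ U) (x : ℝ) :
    scFun N c x = ∑ n ∈ U, c n * EE N n x := by
  rw [scFun_eq]
  exact Finset.sum_subset hU (fun n _ hn => by
    simp [Finsupp.notMem_support_iff.1 hn])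

lemma scFun_sub (N : ℕ) (c d : ℤ →₀ ℂ) (x : ℝ) :
    scFun N (c - d) x = scFun N c x - scFun N d x := by
  have : ∀ e : ℤ →₀ ℂ, scFun N e x = e.sum (fun n a => a * EE N n x) := fun e => rfl
  rw [this, this, this]
  exact Finsupp.sum_sub_index (fun a b₁ b₂ => sub_mul _ _ _)

lemma scFun_add (N : ℕ) (c d : ℤ →₀ ℂ) (x : ℝ) :
    scFun N (c + d) x = scFun N c x + scFun N d x := by
  have : ∀ e : ℤ →₀ ℂ, scFun N e x = e.sum (fun n a => a * EE N n x) := fun e => rfl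
  rw [this, this, this]
  exact Finsupp.sum_add_index (fun a _ => zero_mul _) (fun a _ b₁ b₂ => add_mul _ _ _)

lemma scFun_single (N : ℕ) (n : ℤ) (a : ℂ) (x : ℝ) :
    scFun N (Finsupp.single n a) x = a * EE N n x := by
  have : ∀ e : ℤ →₀ ℂ, scFun N e x = e.sum (fun n a => a * EE N n x) := fun e => rfl
  rw [this]
  exact Finsupp.sum_single_index (zero_mul _)

set_option maxHeartbeats 1000000 in
-- the key integral identity
lemma L1 (N : ℕ) (hN : 0 < N) (c d : ℤ →₀ ℂ) (m : ℤ) :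
    (∫ x in (0:ℝ)..(N:ℝ), (starRingEnd ℂ) (scFun N c (x - (m : ℝ))) * scFun N d x)
      = N * ∑ n ∈ c.support ∪ d.support,
          (starRingEnd ℂ) (c n) * d n * EE N (n * m) 1 := by
  set S := c.support ∪ d.support with hS
  have hc : c.support ⊆ S := Finset.subset_union_left
  have hd : d.support ⊆ S := Finset.subset_union_right
  have key : ∀ x : ℝ, (starRingEnd ℂ) (scFun N c (x - (m : ℝ))) * scFun N d x
      = ∑ n ∈ S, ∑ k ∈ S,
          ((starRingEnd ℂ) (c n) * d k * EE N (n * m) 1) * EE N (k - n) x := by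
    intro x
    rw [scFun_eq_superset N c hc, scFun_eq_superset N d hd, map_sum, Finset.sum_mul_sum]
    apply Finset.sum_congr rfl; intro n _
    apply Finset.sum_congr rfl; intro k _
    rw [map_mul, EE_shift, map_mul, conj_EE, conj_EE, neg_neg]
    rw [show (starRingEnd ℂ) (c n) * (EE N (-n) x * EE N (n * m) 1) * (d k * EE N k x)
      = ((starRingEnd ℂ) (c n) * d k * EE N (n * m) 1) * (EE N (-n) x * EE N k x) by ring]
    rw [EE_mul]
    congr 2
    ring
  simp only [key]
  have hcont : ∀ (j : ℤ) (a : ℂ), Continuous (fun x : ℝ => a * EE N j x) := by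
    intro j a
    apply Continuous.mul continuous_const
    unfold EE
    fun_prop
  rw [intervalIntegral.integral_finset_sum
    (f := fun n x => ∑ k ∈ S, ((starRingEnd ℂ) (c n) * d k * EE N (n * m) 1) * EE N (k - n) x)
    (fun n _ => (continuous_finset_sum S (fun k _ => hcont (k - n) _)).intervalIntegrable _ _)]
  have : ∀ n ∈ S, (∫ x in (0:ℝ)..(N:ℝ), ∑ k ∈ S,
      ((starRingEnd ℂ) (c n) * d k * EE N (n * m) 1) * EE N (k - n) x)
      = ((starRingEnd ℂ) (c n) * d n * EE N (n * m) 1) * N := by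
    intro n hn
    rw [intervalIntegral.integral_finset_sum (fun k _ => (hcont (k - n) _).intervalIntegrable _ _)]
    have hterm : ∀ k ∈ S, (∫ x in (0:ℝ)..(N:ℝ),
        ((starRingEnd ℂ) (c n) * d k * EE N (n * m) 1) * EE N (k - n) x)
        = if k = n then ((starRingEnd ℂ) (c n) * d k * EE N (n * m) 1) * N else 0 := by
      intro k _
      rw [intervalIntegral.integral_const_mul, EE_integral N hN, mul_ite, mul_zero]
      simp [sub_eq_zero]
    rw [Finset.sum_congr rfl hterm, Finset.sum_ite_eq' S n
      (fun k => ((starRingEnd ℂ) (c n) * d k * EE N (n * m) 1) * N), if_pos hn]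
  rw [Finset.sum_congr rfl this, Finset.mul_sum]
  apply Finset.sum_congr rfl
  intro n _
  ring

lemma EE_residue (N : ℕ) (hN : 0 < N) (n m : ℤ) :
    EE N (n * m) 1 = EE N ((n % N) * m) 1 := by
  have h : n * m = (N : ℤ) * (n / N * m) + (n % N) * m := by
    have h0 := Int.mul_ediv_add_emod n N
    calc n * m = ((N : ℤ) * (n / N) + n % N) * m := by rw [h0]
      _ = (N : ℤ) * (n / N * m) + (n % N) * m := by ring
  rw [h, ← EE_mul, EE_int_mul N hN, one_mul]

lemma sum_fiberwise_resid {α : Type*} [AddCommMonoid α] (N : ℕ) (hN : 0 < N)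
    (U : Finset ℤ) (g : ℤ → α) :
    ∑ n ∈ U, g n
      = ∑ s ∈ Finset.range N, ∑ n ∈ U.filter (fun n => n % (N : ℤ) = (s : ℤ)), g n := by
  rw [← Finset.sum_fiberwise_of_maps_to (g := fun n : ℤ => (n % (N : ℤ)).toNat)
    (t := Finset.range N) ?_ g]
  · apply Finset.sum_congr rfl
    intro s hs
    rw [Finset.mem_range] at hs
    congr 1
    apply Finset.filter_congr
    intro n _
    have h1 : 0 ≤ n % (N : ℤ) := Int.emod_nonneg n (by exact_mod_cast hN.ne')
    constructor
    · intro h; omega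
    · intro h; omega
  · intro n _
    have h1 : 0 ≤ n % (N : ℤ) := Int.emod_nonneg n (by exact_mod_cast hN.ne')
    have h2 : n % (N : ℤ) < N := Int.emod_lt_of_pos n (by exact_mod_cast hN)
    rw [Finset.mem_range]
    show (n % (N : ℤ)).toNat < N
    omega

lemma sum_filter_support {α : Type*} [AddCommMonoid α] (c : ℤ →₀ ℂ) {U : Finset ℤ}
    (hU : c.support ⊆ U) (p : ℤ → Prop) [DecidablePred p] (g : ℂ → α) (hg : g 0 = 0) :
    ∑ n ∈ U.filter p, g (c n) = ∑ n ∈ c.support.filter p, g (c n) := by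
  apply (Finset.sum_subset (Finset.filter_subset_filter p hU) _).symm
  intro n _ hn
  rcases Finset.mem_filter.1 ‹n ∈ U.filter p› with ⟨_, hp⟩
  have : n ∉ c.support := fun hc => hn (Finset.mem_filter.2 ⟨hc, hp⟩)
  rw [Finsupp.notMem_support_iff.1 this, hg]

lemma norm_sq_cast (z : ℂ) : ((‖z‖^2 : ℝ) : ℂ) = (starRingEnd ℂ) z * z := by
  rw [mul_comm, Complex.mul_conj]
  norm_cast
  rw [Complex.normSq_eq_norm_sq]

lemma hint_integral (N : ℕ) (hN : 0 < N) (c : ℤ →₀ ℂ) (m : ℤ) :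
    (∫ x in (0:ℝ)..(N:ℝ), (starRingEnd ℂ) (scFun N c (x - (m : ℝ))) * scFun N c x)
      = N * ∑ s ∈ Finset.range N,
          ((∑ n ∈ c.support.filter (fun n => n % (N : ℤ) = (s : ℤ)), (‖c n‖^2 : ℝ)) : ℂ)
            * EE N ((s : ℤ) * m) 1 := by
  rw [L1 N hN c c m, Finset.union_self]
  congr 1
  have step1 : ∀ n ∈ c.support, (starRingEnd ℂ) (c n) * c n * EE N (n * m) 1
      = ((‖c n‖^2 : ℝ) : ℂ) * EE N ((n % N) * m) 1 := by
    intro n _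
    rw [← norm_sq_cast, ← EE_residue N hN]
  rw [Finset.sum_congr rfl step1]
  rw [sum_fiberwise_resid N hN c.support (fun n => ((‖c n‖^2 : ℝ) : ℂ) * EE N ((n % N) * m) 1)]
  apply Finset.sum_congr rfl
  intro s _
  rw [Finset.sum_mul]
  apply Finset.sum_congr rfl
  intro n hn
  rcases Finset.mem_filter.1 hn with ⟨_, hp⟩
  rw [hp]

lemma SO_iff (N : ℕ) (hN : 0 < N) (c : ℤ →₀ ℂ) :
    ShiftOrthoFun N (scFun N c) ↔
    (∀ s : ℕ, s < N →
      ∑ n ∈ c.support.filter (fun n => n % (N : ℤ) = (s : ℤ)), ‖c n‖^2 = 1/(N:ℝ)^2) := by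
  have hNR : (N : ℝ) ≠ 0 := Nat.cast_ne_zero.2 hN.ne'
  have hNC : (N : ℂ) ≠ 0 := Nat.cast_ne_zero.2 hN.ne'
  constructor
  · intro hso s hs
    have key : ∀ m : ℤ, (N : ℂ) * ∑ t ∈ Finset.range N,
        ((∑ n ∈ c.support.filter (fun n => n % (N : ℤ) = (t : ℤ)), (‖c n‖^2 : ℝ)) : ℂ)
          * EE N ((t : ℤ) * m) 1 = if (N : ℤ) ∣ m then 1 else 0 := by
      intro m
      rw [← hint_integral N hN c m]
      exact hso m
    -- sum over m ∈ range N against the dual character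
    have main : ∑ m ∈ Finset.range N, EE N (-(s : ℤ) * m) 1 *
        ((N : ℂ) * ∑ t ∈ Finset.range N,
        ((∑ n ∈ c.support.filter (fun n => n % (N : ℤ) = (t : ℤ)), (‖c n‖^2 : ℝ)) : ℂ)
          * EE N ((t : ℤ) * m) 1)
        = ∑ m ∈ Finset.range N, EE N (-(s : ℤ) * m) 1 *
            (if (N : ℤ) ∣ (m : ℤ) then 1 else 0) := by
      apply Finset.sum_congr rfl
      intro m _
      rw [key (m : ℤ)]
    -- auxiliary : EE at 0 index
    have EE_zero : EE N 0 1 = 1 := by simp [EE]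
    set F : ℕ → ℂ := fun t => ∑ n ∈ c.support.filter (fun n => n % (N : ℤ) = (t : ℤ)),
      ((‖c n‖^2 : ℝ) : ℂ) with hFdef
    have hEEmul : ∀ (t : ℕ) (m : ℕ), EE N (-(s:ℤ) * m) 1 * EE N ((t:ℤ) * m) 1
        = EE N (((t:ℤ) - s) * m) 1 := by
      intro t m
      rw [EE_mul]
      congr 1
      ring
    have lhs_eq : ∑ m ∈ Finset.range N, EE N (-(s : ℤ) * m) 1 *
        ((N : ℂ) * ∑ t ∈ Finset.range N, F t * EE N ((t : ℤ) * m) 1)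
        = (N : ℂ) * (F s * N) := by
      have step1 : ∀ m ∈ Finset.range N, EE N (-(s : ℤ) * m) 1 *
          ((N : ℂ) * ∑ t ∈ Finset.range N, F t * EE N ((t : ℤ) * m) 1)
          = ∑ t ∈ Finset.range N, (N : ℂ) * (F t * EE N (((t:ℤ) - s) * m) 1) := by
        intro m _
        rw [Finset.mul_sum, Finset.mul_sum]
        apply Finset.sum_congr rfl
        intro t _
        rw [show EE N (-(s:ℤ)*m) 1 * ((N:ℂ) * (F t * EE N ((t:ℤ)*m) 1))
          = (N:ℂ) * (F t * (EE N (-(s:ℤ)*m) 1 * EE N ((t:ℤ)*m) 1)) by ring, hEEmul t m]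
      rw [Finset.sum_congr rfl step1, Finset.sum_comm]
      have step2 : ∀ t ∈ Finset.range N,
          ∑ m ∈ Finset.range N, (N : ℂ) * (F t * EE N (((t:ℤ) - s) * m) 1)
          = if t = s then (N : ℂ) * (F t * N) else 0 := by
        intro t ht
        rw [← Finset.mul_sum, ← Finset.mul_sum, EE_geom N hN ((t:ℤ) - s)]
        have hdvd : (N : ℤ) ∣ ((t:ℤ) - s) ↔ t = s := by
          constructor
          · intro hd
            have h1 : (t:ℤ) % N = (s:ℤ) % N :=
              Int.emod_eq_emod_iff_emod_sub_eq_zero.2 (Int.emod_eq_zero_of_dvd hd)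
            have ht' : (t:ℤ) < N := by exact_mod_cast Finset.mem_range.1 ht
            have hs' : (s:ℤ) < N := by exact_mod_cast hs
            rw [Int.emod_eq_of_lt (by positivity) ht', Int.emod_eq_of_lt (by positivity) hs'] at h1
            exact_mod_cast h1
          · intro h
            rw [h]
            simp
        by_cases h : t = s
        · rw [if_pos ((hdvd).2 h), if_pos h]
        · rw [if_neg (fun hc => h (hdvd.1 hc)), if_neg h]
          simp
      rw [Finset.sum_congr rfl step2, Finset.sum_ite_eq' (Finset.range N) s
        (fun t => (N : ℂ) * (F t * N)), if_pos (Finset.mem_range.2 hs)]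
    have rhs_eq : ∑ m ∈ Finset.range N, EE N (-(s : ℤ) * m) 1 *
        (if (N : ℤ) ∣ (m : ℤ) then 1 else 0) = 1 := by
      have step : ∀ m ∈ Finset.range N, EE N (-(s : ℤ) * m) 1 *
          (if (N : ℤ) ∣ (m : ℤ) then 1 else 0) = if m = 0 then 1 else 0 := by
        intro m hm
        by_cases h0 : m = 0
        · subst h0
          simp [EE_zero]
        · have hnd : ¬ (N : ℤ) ∣ (m : ℤ) := by
            intro hd
            have h1 : (N : ℤ) ≤ m := Int.le_of_dvd (by positivity) hd
            have h2 : m < N := Finset.mem_range.1 hm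
            omega
          simp [hnd, h0]
      rw [Finset.sum_congr rfl step, Finset.sum_ite_eq' (Finset.range N) 0 (fun _ => (1:ℂ)),
        if_pos (Finset.mem_range.2 hN)]
    have final : (N : ℂ) * (F s * N) = 1 := by
      rw [← lhs_eq, ← rhs_eq]
      exact main
    have hFs : F s = 1 / (N:ℂ)^2 := by
      field_simp at final ⊢
      linear_combination final
    have : ((∑ n ∈ c.support.filter (fun n => n % (N : ℤ) = (s : ℤ)), ‖c n‖^2 : ℝ) : ℂ)
        = ((1/(N:ℝ)^2 : ℝ) : ℂ) := by
      rw [Complex.ofReal_sum]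
      show F s = _
      rw [hFs]
      push_cast
      norm_num
    exact_mod_cast this

  · intro hF m
    rw [hint_integral N hN c m]
    have : ∀ s ∈ Finset.range N,
        ((∑ n ∈ c.support.filter (fun n => n % (N : ℤ) = (s : ℤ)), (‖c n‖^2 : ℝ)) : ℂ)
          * EE N ((s : ℤ) * m) 1 = ((1/(N:ℝ)^2 : ℝ) : ℂ) * EE N (m * s) 1 := by
      intro s hs
      rw [mul_comm (s : ℤ) m, ← Complex.ofReal_sum, hF s (Finset.mem_range.1 hs)]
    rw [Finset.sum_congr rfl this, ← Finset.mul_sum, EE_geom N hN m]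
    split_ifs with h
    · push_cast
      field_simp
    · simp

lemma EE_zero' (N : ℕ) (x : ℝ) : EE N 0 x = 1 := by simp [EE]

lemma L2 (N : ℕ) (hN : 0 < N) (c : ℤ →₀ ℂ) :
    (∫ x in (0:ℝ)..(N:ℝ), ‖scFun N c x‖^2) = N * ∑ n ∈ c.support, ‖c n‖^2 := by
  have h2 : ∀ x : ℝ, ((‖scFun N c x‖^2 : ℝ) : ℂ)
      = (starRingEnd ℂ) (scFun N c (x - ((0:ℤ) : ℝ))) * scFun N c x := by
    intro x
    rw [norm_sq_cast]
    norm_num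
  have h3 : ((∫ x in (0:ℝ)..(N:ℝ), ‖scFun N c x‖^2 : ℝ) : ℂ)
      = ((N : ℝ) * ∑ n ∈ c.support, ‖c n‖^2 : ℝ) := by
    rw [← intervalIntegral.integral_ofReal (f := fun x => ‖scFun N c x‖^2)]
    rw [intervalIntegral.integral_congr (fun x _ => h2 x), L1 N hN c c 0, Finset.union_self]
    push_cast
    rw [Finset.mul_sum, Finset.mul_sum]
    apply Finset.sum_congr rfl
    intro n _
    rw [mul_zero, EE_zero', mul_one]
    rw [show (((‖c n‖:ℝ):ℂ))^2 = ((‖c n‖^2 : ℝ) : ℂ) by push_cast; ring, norm_sq_cast]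
  exact_mod_cast h3

lemma l2_triangle (s : Finset ℤ) (a b : ℤ → ℂ) :
    (Real.sqrt (∑ n ∈ s, ‖a n‖^2) - Real.sqrt (∑ n ∈ s, ‖b n‖^2))^2
      ≤ ∑ n ∈ s, ‖a n - b n‖^2 := by
  set A := ∑ n ∈ s, ‖a n‖^2 with hA
  set B := ∑ n ∈ s, ‖b n‖^2 with hB
  have hA0 : 0 ≤ A := Finset.sum_nonneg (fun n _ => sq_nonneg _)
  have hB0 : 0 ≤ B := Finset.sum_nonneg (fun n _ => sq_nonneg _)
  have hnormSq : ∀ z : ℂ, ‖z‖^2 = Complex.normSq z := by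
    intro z
    rw [Complex.normSq_eq_norm_sq]
  have expand : ∑ n ∈ s, ‖a n - b n‖^2
      = A + B - 2 * ∑ n ∈ s, (a n * (starRingEnd ℂ) (b n)).re := by
    rw [hA, hB, ← Finset.sum_add_distrib, Finset.mul_sum, ← Finset.sum_sub_distrib]
    apply Finset.sum_congr rfl
    intro n _
    rw [hnormSq, hnormSq, hnormSq, Complex.normSq_sub]
  have cs : ∑ n ∈ s, (a n * (starRingEnd ℂ) (b n)).re ≤ Real.sqrt A * Real.sqrt B := by
    have h1 : ∑ n ∈ s, (a n * (starRingEnd ℂ) (b n)).re ≤ ∑ n ∈ s, ‖a n‖ * ‖b n‖ := by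
      apply Finset.sum_le_sum
      intro n _
      calc (a n * (starRingEnd ℂ) (b n)).re ≤ ‖a n * (starRingEnd ℂ) (b n)‖ :=
            Complex.re_le_norm _
        _ = ‖a n‖ * ‖b n‖ := by
            rw [norm_mul, Complex.norm_conj]
    have h2 : (∑ n ∈ s, ‖a n‖ * ‖b n‖)^2 ≤ A * B := by
      rw [hA, hB]
      exact Finset.sum_mul_sq_le_sq_mul_sq s (fun n => ‖a n‖) (fun n => ‖b n‖)
    have h3 : ∑ n ∈ s, ‖a n‖ * ‖b n‖ ≤ Real.sqrt (A * B) := by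
      rw [Real.le_sqrt (Finset.sum_nonneg (fun n _ => mul_nonneg (norm_nonneg _) (norm_nonneg _)))
        (mul_nonneg hA0 hB0)]
      exact h2
    calc ∑ n ∈ s, (a n * (starRingEnd ℂ) (b n)).re ≤ Real.sqrt (A * B) := h1.trans h3
      _ = Real.sqrt A * Real.sqrt B := Real.sqrt_mul hA0 B
  have hsA := Real.sq_sqrt hA0
  have hsB := Real.sq_sqrt hB0
  nlinarith [cs, expand]

lemma tsum_fiber (N : ℕ) (hN : 0 < N) (c : ℤ →₀ ℂ) (t : ℤ) :
    ∑' j : ℤ, ‖c (t + (N : ℤ) * j)‖^2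
      = ∑ n ∈ c.support.filter (fun n => n % (N : ℤ) = t % (N : ℤ)), ‖c n‖^2 := by
  have hNZ : (N : ℤ) ≠ 0 := by exact_mod_cast hN.ne'
  classical
  set e : ℤ → ℤ := fun j => t + (N : ℤ) * j with he
  have hinj : Function.Injective e := by
    intro a b h
    simp only [he, add_right_inj] at h
    exact mul_left_cancel₀ hNZ h
  have hinj' : Set.InjOn e (e ⁻¹' (c.support : Set ℤ)) := hinj.injOn
  rw [tsum_eq_sum (s := c.support.preimage e hinj') (f := fun j => ‖c (e j)‖^2) ?_]
  · rw [Finset.sum_preimage' e c.support hinj' (fun n => ‖c n‖^2)]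
    congr 1
    apply Finset.filter_congr
    intro n _
    simp only [Set.mem_range, he]
    constructor
    · rintro ⟨j, rfl⟩
      simp [Int.add_mul_emod_self_left]
    · intro h
      have hd : (N : ℤ) ∣ (n - t) :=
        Int.dvd_of_emod_eq_zero (Int.emod_eq_emod_iff_emod_sub_eq_zero.1 h)
      obtain ⟨j, hj⟩ := hd
      exact ⟨j, by linarith⟩
  · intro j hj
    have h0 : e j ∉ c.support := fun hc => hj (Finset.mem_preimage.2 hc)
    show ‖c (e j)‖^2 = 0
    rw [Finsupp.notMem_support_iff.1 h0]
    simp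


lemma dist_formula (N : ℕ) (hN : 0 < N) (cf c : ℤ →₀ ℂ) (U : Finset ℤ)
    (hU : cf.support ∪ c.support ⊆ U) :
    (∫ x in (0:ℝ)..(N:ℝ), ‖scFun N cf x - scFun N c x‖^2)
      = N * ∑ n ∈ U, ‖cf n - c n‖^2 := by
  have h1 : ∀ x : ℝ, ‖scFun N cf x - scFun N c x‖^2 = ‖scFun N (cf - c) x‖^2 := by
    intro x
    rw [scFun_sub]
  rw [intervalIntegral.integral_congr (fun x _ => h1 x), L2 N hN]
  congr 1
  have h2 : ∑ n ∈ (cf - c).support, ‖(cf - c) n‖^2 = ∑ n ∈ U, ‖(cf - c) n‖^2 := by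
    apply Finset.sum_subset (subset_trans Finsupp.support_sub hU)
    intro n _ hn
    rw [Finsupp.notMem_support_iff.1 hn]
    simp
  rw [h2]
  apply Finset.sum_congr rfl
  intro n _
  rw [Finsupp.sub_apply]

/-- **Non-uniqueness of the shift-orthogonal projection.** If some fiber mass of
`f` vanishes (while all others are positive), then the projection problem
`argmin ‖f − ψ‖₂` over shift-orthogonal supercell trigonometric polynomials has
at least two distinct solutions. -/
theorem projection_not_unique (N : ℕ) (hN : 2 ≤ N) (cf : ℤ →₀ ℂ)
    (M : ℤ → ℝ) (hM : ∀ r : ℤ, M r = ∑' j : ℤ, ‖cf (r + (N : ℤ) * j)‖ ^ 2)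
    (r : ℕ) (hr : r < N) (hMr : M (r : ℤ) = 0)
    (hMpos : ∀ r' : ℕ, r' < N → r' ≠ r → 0 < M (r' : ℤ)) :
    ∃ c₁ c₂ : ℤ →₀ ℂ,
      scFun N c₁ ≠ scFun N c₂ ∧
      ShiftOrthoFun N (scFun N c₁) ∧ ShiftOrthoFun N (scFun N c₂) ∧
      (∫ x in (0:ℝ)..(N:ℝ), ‖scFun N cf x - scFun N c₁ x‖ ^ 2) =
        (∫ x in (0:ℝ)..(N:ℝ), ‖scFun N cf x - scFun N c₂ x‖ ^ 2) ∧
      ∀ cφ : ℤ →₀ ℂ, ShiftOrthoFun N (scFun N cφ) →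
        (∫ x in (0:ℝ)..(N:ℝ), ‖scFun N cf x - scFun N c₁ x‖ ^ 2) ≤
          ∫ x in (0:ℝ)..(N:ℝ), ‖scFun N cf x - scFun N cφ x‖ ^ 2 := by
  classical
  have hN0 : 0 < N := by omega
  have hNZ : (N : ℤ) ≠ 0 := by exact_mod_cast hN0.ne'
  have hNRpos : (0:ℝ) < N := by exact_mod_cast hN0
  have hNC : (N : ℂ) ≠ 0 := Nat.cast_ne_zero.2 hN0.ne'
  set Fr : ℕ → ℝ := fun s => ∑ n ∈ cf.support.filter (fun n => n % (N:ℤ) = (s:ℤ)), ‖cf n‖^2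
    with hFrdef
  have hres : ∀ s : ℕ, s < N → ((s:ℤ) % (N:ℤ)) = (s:ℤ) := by
    intro s hs
    exact Int.emod_eq_of_lt (by exact_mod_cast Nat.zero_le s) (by exact_mod_cast hs)
  have hMF : ∀ s : ℕ, s < N → M (s:ℤ) = Fr s := by
    intro s hs
    rw [hM, show (∑' j : ℤ, ‖cf ((s:ℤ) + (N : ℤ) * j)‖ ^ 2)
        = ∑' j : ℤ, ‖cf ((s:ℤ) + (N : ℤ) * j)‖^2 from rfl, tsum_fiber N hN0 cf (s:ℤ),
      hres s hs]
  have hFrr : Fr r = 0 := by rw [← hMF r hr]; exact hMr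
  have hFrpos : ∀ s : ℕ, s < N → s ≠ r → 0 < Fr s := by
    intro s hs hsr
    rw [← hMF s hs]
    exact hMpos s hs hsr
  have hcf0 : ∀ n : ℤ, n % (N:ℤ) = (r:ℤ) → cf n = 0 := by
    intro n hn
    by_contra hne
    have hmem : n ∈ cf.support.filter (fun n => n % (N:ℤ) = (r:ℤ)) :=
      Finset.mem_filter.2 ⟨Finsupp.mem_support_iff.2 hne, hn⟩
    have hle : ‖cf n‖^2 ≤ Fr r :=
      Finset.single_le_sum (fun i _ => sq_nonneg ‖cf i‖) hmem
    have hpos : 0 < ‖cf n‖^2 := pow_pos (norm_pos_iff.2 hne) 2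
    linarith [hFrr]
  -- weights
  set lam : ℕ → ℝ := fun s => ((N:ℝ) * Real.sqrt (Fr s))⁻¹ with hlamdef
  set w : ℤ → ℂ := fun n =>
    (((((N:ℝ) * Real.sqrt (∑ k ∈ cf.support.filter
      (fun k => k % (N:ℤ) = n % (N:ℤ)), ‖cf k‖^2))⁻¹ : ℝ)) : ℂ) with hwdef
  have hw_res : ∀ (n : ℤ) (s : ℕ), n % (N:ℤ) = (s:ℤ) → w n = ((lam s : ℝ) : ℂ) := by
    intro n s hn
    simp only [hwdef, hlamdef, hn, hFrdef]
  -- the common scaled coefficient vector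
  obtain ⟨c₀, hc₀⟩ : ∃ c₀ : ℤ →₀ ℂ, ∀ n, c₀ n = w n * cf n := by
    refine ⟨Finsupp.ofSupportFinite (fun n => w n * cf n) ?_, fun n => ?_⟩
    · apply Set.Finite.subset cf.support.finite_toSet
      intro n hn
      simp only [Function.mem_support] at hn
      simp only [Finset.mem_coe, Finsupp.mem_support_iff]
      intro h
      exact hn (by rw [h, mul_zero])
    · rw [Finsupp.ofSupportFinite_coe]
  have hc₀0 : ∀ n : ℤ, n % (N:ℤ) = (r:ℤ) → c₀ n = 0 := by
    intro n hn
    rw [hc₀, hcf0 n hn, mul_zero]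
  have hc₀sup : c₀.support ⊆ cf.support := by
    intro n hn
    rw [Finsupp.mem_support_iff] at hn ⊢
    intro h
    exact hn (by rw [hc₀, h, mul_zero])
  have hrr : (r:ℤ) % (N:ℤ) = (r:ℤ) := hres r hr
  have hrNr : ((r:ℤ) + N) % (N:ℤ) = (r:ℤ) := by
    rw [show (r:ℤ) + N = (r:ℤ) + (N:ℤ) * 1 by ring, Int.add_mul_emod_self_left]
    exact hrr
  have hsupq : ∀ q : ℤ, (c₀ + Finsupp.single q ((N:ℂ)⁻¹)).support ⊆ cf.support ∪ {q} := by
    intro q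
    refine subset_trans Finsupp.support_add ?_
    refine Finset.union_subset (subset_trans hc₀sup Finset.subset_union_left) ?_
    exact subset_trans Finsupp.support_single_subset (fun n hn => Finset.mem_union_right _ hn)
  -- fiber masses of the perturbed coefficient vectors
  have key_fib : ∀ q : ℤ, q % (N:ℤ) = (r:ℤ) → ∀ s : ℕ, s < N →
      ∑ n ∈ (cf.support ∪ {q}).filter (fun n => n % (N:ℤ) = (s:ℤ)),
        ‖(c₀ + Finsupp.single q ((N:ℂ)⁻¹)) n‖^2 = 1/(N:ℝ)^2 := by
    intro q hq s hs
    have hval : ∀ n : ℤ, (c₀ + Finsupp.single q ((N:ℂ)⁻¹)) n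
        = c₀ n + (if q = n then (N:ℂ)⁻¹ else 0) := by
      intro n
      rw [Finsupp.add_apply, Finsupp.single_apply]
    by_cases hsr : s = r
    · subst hsr
      have hterm : ∀ n ∈ (cf.support ∪ {q}).filter (fun n => n % (N:ℤ) = (s:ℤ)),
          ‖(c₀ + Finsupp.single q ((N:ℂ)⁻¹)) n‖^2 = if n = q then 1/(N:ℝ)^2 else 0 := by
        intro n hn
        rcases Finset.mem_filter.1 hn with ⟨_, hres'⟩
        rw [hval, hc₀0 n hres', zero_add]
        by_cases h : q = n
        · subst h
          rw [if_pos rfl, if_pos rfl, norm_inv, Complex.norm_natCast]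
          field_simp
        · rw [if_neg h, if_neg (fun hh => h hh.symm)]
          simp
      rw [Finset.sum_congr rfl hterm,
        Finset.sum_ite_eq' _ q (fun _ => 1/(N:ℝ)^2), if_pos]
      exact Finset.mem_filter.2 ⟨Finset.mem_union_right _ (Finset.mem_singleton_self q), hq⟩
    · have hterm : ∀ n ∈ (cf.support ∪ {q}).filter (fun n => n % (N:ℤ) = (s:ℤ)),
          ‖(c₀ + Finsupp.single q ((N:ℂ)⁻¹)) n‖^2 = (lam s)^2 * ‖cf n‖^2 := by
        intro n hn
        rcases Finset.mem_filter.1 hn with ⟨_, hres'⟩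
        have hnq : q ≠ n := by
          intro h
          subst h
          rw [hq] at hres'
          exact hsr (by exact_mod_cast hres'.symm)
        rw [hval, if_neg hnq, add_zero, hc₀, hw_res n s hres', norm_mul,
          Complex.norm_real, Real.norm_eq_abs, mul_pow, _root_.sq_abs]
      rw [Finset.sum_congr rfl hterm, ← Finset.mul_sum]
      have hsum : ∑ n ∈ (cf.support ∪ {q}).filter (fun n => n % (N:ℤ) = (s:ℤ)), ‖cf n‖^2
          = Fr s :=
        sum_filter_support cf Finset.subset_union_left _ (fun z => ‖z‖^2) (by simp)
      rw [hsum]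
      have hF := hFrpos s hs hsr
      have hsq : Real.sqrt (Fr s)^2 = Fr s := Real.sq_sqrt hF.le
      have hsqpos : 0 < Real.sqrt (Fr s) := Real.sqrt_pos.2 hF
      rw [hlamdef]
      field_simp
      linear_combination (-1:ℝ) * hsq
  -- distances
  have dist_eq : ∀ q : ℤ, q % (N:ℤ) = (r:ℤ) →
      (∫ x in (0:ℝ)..(N:ℝ), ‖scFun N cf x - scFun N (c₀ + Finsupp.single q ((N:ℂ)⁻¹)) x‖^2)
        = N * ∑ s ∈ Finset.range N, (Real.sqrt (Fr s) - 1/(N:ℝ))^2 := by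
    intro q hq
    set cq := c₀ + Finsupp.single q ((N:ℂ)⁻¹) with hcq
    have hval : ∀ n : ℤ, cq n = c₀ n + (if q = n then (N:ℂ)⁻¹ else 0) := by
      intro n
      rw [hcq, Finsupp.add_apply, Finsupp.single_apply]
    have hU : cf.support ∪ cq.support ⊆ cf.support ∪ {q} :=
      Finset.union_subset Finset.subset_union_left (hsupq q)
    rw [dist_formula N hN0 cf cq _ hU,
      sum_fiberwise_resid N hN0 (cf.support ∪ {q}) (fun n => ‖cf n - cq n‖^2)]
    congr 1
    apply Finset.sum_congr rfl
    intro s hs'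
    have hs : s < N := Finset.mem_range.1 hs'
    by_cases hsr : s = r
    · subst hsr
      have hterm : ∀ n ∈ (cf.support ∪ {q}).filter (fun n => n % (N:ℤ) = (s:ℤ)),
          ‖cf n - cq n‖^2 = if n = q then 1/(N:ℝ)^2 else 0 := by
        intro n hn
        rcases Finset.mem_filter.1 hn with ⟨_, hres'⟩
        rw [hval, hc₀0 n hres', zero_add, hcf0 n hres', zero_sub, norm_neg]
        by_cases h : q = n
        · subst h
          rw [if_pos rfl, if_pos rfl, norm_inv, Complex.norm_natCast]
          field_simp
        · rw [if_neg h, if_neg (fun hh => h hh.symm)]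
          simp
      rw [Finset.sum_congr rfl hterm,
        Finset.sum_ite_eq' _ q (fun _ => 1/(N:ℝ)^2), if_pos, hFrr, Real.sqrt_zero]
      · ring
      · exact Finset.mem_filter.2 ⟨Finset.mem_union_right _ (Finset.mem_singleton_self q), hq⟩
    · have hterm : ∀ n ∈ (cf.support ∪ {q}).filter (fun n => n % (N:ℤ) = (s:ℤ)),
          ‖cf n - cq n‖^2 = (1 - lam s)^2 * ‖cf n‖^2 := by
        intro n hn
        rcases Finset.mem_filter.1 hn with ⟨_, hres'⟩
        have hnq : q ≠ n := by
          intro h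
          subst h
          rw [hq] at hres'
          exact hsr (by exact_mod_cast hres'.symm)
        rw [hval, if_neg hnq, add_zero, hc₀, hw_res n s hres']
        have hrw : cf n - ((lam s : ℝ) : ℂ) * cf n = ((1 - lam s : ℝ) : ℂ) * cf n := by
          push_cast
          ring
        rw [hrw, norm_mul, Complex.norm_real, Real.norm_eq_abs, mul_pow, _root_.sq_abs]
      rw [Finset.sum_congr rfl hterm, ← Finset.mul_sum]
      have hsum : ∑ n ∈ (cf.support ∪ {q}).filter (fun n => n % (N:ℤ) = (s:ℤ)), ‖cf n‖^2
          = Fr s :=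
        sum_filter_support cf Finset.subset_union_left _ (fun z => ‖z‖^2) (by simp)
      rw [hsum]
      have hF := hFrpos s hs hsr
      have hsq : Real.sqrt (Fr s)^2 = Fr s := Real.sq_sqrt hF.le
      have hsqpos : 0 < Real.sqrt (Fr s) := Real.sqrt_pos.2 hF
      rw [hlamdef]
      field_simp
      linear_combination (-(((N:ℝ) * Real.sqrt (Fr s) - 1)^2)) * hsq
  refine ⟨c₀ + Finsupp.single (r:ℤ) ((N:ℂ)⁻¹), c₀ + Finsupp.single ((r:ℤ) + N) ((N:ℂ)⁻¹),
    ?_, ?_, ?_, ?_, ?_⟩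
  · -- the two functions differ
    intro h
    have h12 := congrFun h (1/2 : ℝ)
    rw [scFun_add, scFun_add, scFun_single, scFun_single] at h12
    have h2 := add_left_cancel h12
    have hEE2 : EE N ((r:ℤ) + N) (1/2) = EE N (r:ℤ) (1/2) * EE N (N:ℤ) (1/2) :=
      (EE_mul N (r:ℤ) (N:ℤ) (1/2)).symm
    have hEEN : EE N ((N:ℕ):ℤ) ((1:ℝ)/2) = -1 := by
      rw [EE, show 2 * (Real.pi:ℂ) * Complex.I * (((N:ℕ):ℤ):ℂ) * (((1:ℝ)/2 : ℝ):ℂ) / (N:ℂ)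
          = (Real.pi:ℂ) * Complex.I by push_cast; field_simp]
      exact Complex.exp_pi_mul_I
    rw [hEE2, hEEN] at h2
    have hne : (N:ℂ)⁻¹ * EE N (r:ℤ) (1/2) ≠ 0 :=
      mul_ne_zero (inv_ne_zero hNC) (EE_ne_zero _ _ _)
    apply hne
    linear_combination h2 / 2
  · -- shift-orthogonality of c₁
    rw [SO_iff N hN0]
    intro s hs
    rw [← sum_filter_support (c₀ + Finsupp.single (r:ℤ) ((N:ℂ)⁻¹)) (hsupq (r:ℤ))
      (fun n => n % (N:ℤ) = (s:ℤ)) (fun z => ‖z‖^2) (by simp)]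
    exact key_fib (r:ℤ) hrr s hs
  · -- shift-orthogonality of c₂
    rw [SO_iff N hN0]
    intro s hs
    rw [← sum_filter_support (c₀ + Finsupp.single ((r:ℤ) + N) ((N:ℂ)⁻¹)) (hsupq ((r:ℤ) + N))
      (fun n => n % (N:ℤ) = (s:ℤ)) (fun z => ‖z‖^2) (by simp)]
    exact key_fib ((r:ℤ) + N) hrNr s hs
  · -- equal distances
    rw [dist_eq (r:ℤ) hrr, dist_eq ((r:ℤ) + N) hrNr]
  · -- minimality
    intro cφ hso
    rw [dist_eq (r:ℤ) hrr]
    have hfib := (SO_iff N hN0 cφ).1 hso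
    rw [dist_formula N hN0 cf cφ (cf.support ∪ cφ.support) subset_rfl,
      sum_fiberwise_resid N hN0 (cf.support ∪ cφ.support) (fun n => ‖cf n - cφ n‖^2)]
    apply mul_le_mul_of_nonneg_left ?_ (le_of_lt hNRpos)
    apply Finset.sum_le_sum
    intro s hs'
    have hs := Finset.mem_range.1 hs'
    have hA : ∑ n ∈ (cf.support ∪ cφ.support).filter (fun n => n % (N:ℤ) = (s:ℤ)),
        ‖cf n‖^2 = Fr s :=
      sum_filter_support cf Finset.subset_union_left _ (fun z => ‖z‖^2) (by simp)
    have hB : ∑ n ∈ (cf.support ∪ cφ.support).filter (fun n => n % (N:ℤ) = (s:ℤ)),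
        ‖cφ n‖^2 = 1/(N:ℝ)^2 := by
      rw [sum_filter_support cφ Finset.subset_union_right _ (fun z => ‖z‖^2) (by simp)]
      exact hfib s hs
    have htri := l2_triangle ((cf.support ∪ cφ.support).filter (fun n => n % (N:ℤ) = (s:ℤ)))
      (fun n => cf n) (fun n => cφ n)
    rw [hA, hB, show (1:ℝ)/(N:ℝ)^2 = ((1:ℝ)/N)^2 by ring,
      Real.sqrt_sq (by positivity)] at htri
    exact htri
end
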